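/- Let m and n be nonnegative integers with n > 0, let y_0 < y_1 < ... < y_{n-1} be the positive zeros of P̄^m_{m+2n+1} in (0,1), and define σ_j = 2(2m+4n+3) / ((1-y_j²)((d/dx)P̄^m_{m+2n+1}(y_j))²) for j < n and σ_n = (2m+4n+3) / ((d/dx)P̄^m_{m+2n+1}(0))². Then for every even polynomial p of degree at most 4n, ∫_{-1}^{1} (1-x²)^m p(x) dx = σ_n p(0) + Σ_{j=0}^{n-1} σ_j (1-y_j²)^m p(y_j). -/

import Mathlib

open scoped Nat

/-- The Legendre polynomial of degree `l`, via Rodrigues' formula. -/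
noncomputable def legendreP (l : ℕ) : ℝ → ℝ := fun x =>
  (1 / (2 ^ l * (l ! : ℝ))) * iteratedDeriv l (fun y : ℝ => (y ^ 2 - 1) ^ l) x

/-- The normalized associated Legendre function `P̄_l^m`. -/
noncomputable def nalf (m l : ℕ) : ℝ → ℝ := fun x =>
  Real.sqrt ((2 * l + 1) / 2 * ((l - m)! : ℝ) / ((l + m)! : ℝ)) *
    (1 - x ^ 2) ^ ((m : ℝ) / 2) * iteratedDeriv m (legendreP l) x

/-- The spectral (l²-operator) norm of a real matrix. -/
noncomputable def specNorm {α β : Type*} [Fintype α] [Fintype β] [DecidableEq α] [DecidableEq β]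
    (A : Matrix α β ℝ) : ℝ :=
  ‖LinearMap.toContinuousLinearMap (Matrix.toEuclideanLin A)‖

/-- The singular values of a real matrix, listed in decreasing order. -/
noncomputable def singularValues {p q : ℕ} (A : Matrix (Fin p) (Fin q) ℝ) : List ℝ :=
  List.insertionSort (· ≥ ·)
    (List.ofFn fun i => Real.sqrt ((Matrix.isHermitian_conjTranspose_mul_self A).eigenvalues i))

noncomputable def ccoef (m l : ℕ) : ℝ :=
  Real.sqrt ((((l : ℝ) - m + 1) * ((l : ℝ) - m + 2) * ((l : ℝ) + m + 1) * ((l : ℝ) + m + 2)) /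
    ((2 * (l : ℝ) + 1) * (2 * (l : ℝ) + 3) ^ 2 * (2 * (l : ℝ) + 5)))

noncomputable def dcoef (m l : ℕ) : ℝ :=
  (2 * (l : ℝ) * ((l : ℝ) + 1) - 2 * (m : ℝ) ^ 2 - 1) /
    ((2 * (l : ℝ) - 1) * (2 * (l : ℝ) + 3))


/-!
Put `l = m + 2n + 1`. The polynomial `P_l^{(m)}` is odd of degree `l - m = 2n + 1`, so its zeros are
exactly `0` and `±y_j`. By Rodrigues' formula and `l + m` integrations by parts it is orthogonal,
for the weight `(1 - x²)ᵐ`, to all polynomials of degree `< l - m`; hence interpolation at its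
zeros integrates exactly up to degree `2(l - m) - 1 = 4n + 1`. The weight at a node `x` follows by
testing its Lagrange basis polynomial against `P_{l-1}^{(m)}` and evaluating the relation
`(1 - x²) P_l^{(m+1)} = (l + m) P_{l-1}^{(m)} - (l - m) x P_l^{(m)}` at `x`: it is
`2 (l + m)! / (l - m)! / ((1 - x²) P_l^{(m+1)}(x)²)`, which is `σ` rewritten through the derivative
of `P̄_l^m`. As `p` and the weights are even, the nodes `±y_j` pair up.
-/

open Polynomial

section PolynomialCalculus

variable {R : Type*} [CommRing R]

lemma iterate_derivative_comp_neg_X (p : R[X]) (k : ℕ) :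
    derivative^[k] (p.comp (-X)) = (-1) ^ k * (derivative^[k] p).comp (-X) := by
  induction k with
  | zero => simp
  | succ k ih =>
    rw [Function.iterate_succ_apply', ih, Function.iterate_succ_apply', derivative_mul,
      derivative_comp]
    simp only [derivative_neg, derivative_X, derivative_pow, derivative_one, neg_zero, mul_zero,
      zero_mul]
    ring

lemma iterate_derivative_eq_C_of_natDegree_le {p : R[X]} {k : ℕ} (h : p.natDegree ≤ k) :
    derivative^[k] p = C ((k ! : R) * p.coeff k) := by
  rw [eq_C_of_natDegree_le_zero ((natDegree_iterate_derivative p k).trans (by omega)),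
    coeff_iterate_derivative, zero_add, Nat.descFactorial_self, nsmul_eq_mul]

lemma eval_eq_zero_of_pow_dvd {P q : R[X]} {x : R} {k : ℕ} (hx : P.eval x = 0) (hk : k ≠ 0)
    (h : P ^ k ∣ q) : q.eval x = 0 := by
  obtain ⟨r, rfl⟩ := h
  simp [hx, hk]

end PolynomialCalculus

lemma iteratedDeriv_eval (p : ℝ[X]) (k : ℕ) :
    iteratedDeriv k (fun x => p.eval x) = fun x => (derivative^[k] p).eval x := by
  induction k with
  | zero => simp
  | succ k ih =>
    rw [iteratedDeriv_succ, ih, Function.iterate_succ_apply']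
    exact funext fun x => Polynomial.deriv _

lemma integral_derivative_eval (p : ℝ[X]) (a b : ℝ) :
    ∫ x in a..b, (derivative p).eval x = p.eval b - p.eval a :=
  intervalIntegral.integral_eq_sub_of_hasDerivAt (fun x _ => p.hasDerivAt x)
    (p.derivative.continuous.intervalIntegrable a b)

lemma integral_derivative_eval_mul (u v : ℝ[X]) (a b : ℝ) :
    ∫ x in a..b, (derivative u).eval x * v.eval x =
      u.eval b * v.eval b - u.eval a * v.eval a -
        ∫ x in a..b, u.eval x * (derivative v).eval x := by
  have h := integral_derivative_eval (u * v) a b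
  simp only [derivative_mul, eval_add, eval_mul] at h
  rw [intervalIntegral.integral_add (Continuous.intervalIntegrable (by fun_prop) _ _)
    (Continuous.intervalIntegrable (by fun_prop) _ _)] at h
  linarith

lemma integral_iterate_derivative_mul {P : ℝ[X]} {a b : ℝ} (ha : P.eval a = 0) (hb : P.eval b = 0)
    {u : ℝ[X]} {α : ℕ} (hu : P ^ α ∣ u) (K : ℕ) :
    ∀ {v : ℝ[X]} {β : ℕ}, P ^ β ∣ v → K ≤ α + β →
      ∫ x in a..b, (derivative^[K] u).eval x * v.eval x =
        (-1) ^ K * ∫ x in a..b, u.eval x * (derivative^[K] v).eval x := by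
  induction K with
  | zero => intros; simp
  | succ K ih =>
    intro v β hv hK
    have hbdry : ∀ x, P.eval x = 0 → (derivative^[K] u).eval x * v.eval x = 0 := by
      intro x hx
      rcases Nat.eq_zero_or_pos β with rfl | hβ
      · rw [eval_eq_zero_of_pow_dvd hx (by omega) (pow_sub_dvd_iterate_derivative_of_pow_dvd K hu),
          zero_mul]
      · rw [eval_eq_zero_of_pow_dvd hx hβ.ne' hv, mul_zero]
    rw [Function.iterate_succ_apply', integral_derivative_eval_mul, hbdry a ha, hbdry b hb,
      ih (pow_sub_one_dvd_derivative_of_pow_dvd hv) (by omega), ← Function.iterate_succ_apply]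
    ring

lemma monic_X_sq_sub_one_pow (l : ℕ) : ((X ^ 2 - 1 : ℝ[X]) ^ l).Monic := by
  simpa using ((monic_X_pow_sub_C (1 : ℝ) two_ne_zero).pow l)

lemma natDegree_X_sq_sub_one_pow (l : ℕ) : ((X ^ 2 - 1 : ℝ[X]) ^ l).natDegree = 2 * l := by
  have h := (monic_X_pow_sub_C (1 : ℝ) two_ne_zero).natDegree_pow l
  rwa [natDegree_X_pow_sub_C, C_1, mul_comm] at h

/-- `P_l^{(m)}`, by Rodrigues' formula. -/
noncomputable def legendreDeriv (l m : ℕ) : ℝ[X] :=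
  C (1 / (2 ^ l * l ! : ℝ)) * derivative^[l + m] ((X ^ 2 - 1) ^ l)

noncomputable def legendreLead (l m : ℕ) : ℝ :=
  (2 * l).descFactorial (l + m) / (2 ^ l * l ! : ℝ)

lemma iteratedDeriv_legendreP (l m : ℕ) :
    iteratedDeriv m (legendreP l) = fun x => (legendreDeriv l m).eval x := by
  have h : legendreP l =
      fun x => (C (1 / (2 ^ l * l ! : ℝ)) * derivative^[l] ((X ^ 2 - 1) ^ l)).eval x := by
    have hG : (fun y : ℝ => (y ^ 2 - 1) ^ l) = fun y => ((X ^ 2 - 1 : ℝ[X]) ^ l).eval y := by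
      simp
    ext x
    rw [legendreP, hG, iteratedDeriv_eval, eval_mul, eval_C]
  rw [h, iteratedDeriv_eval, iterate_derivative_C_mul, ← Function.iterate_add_apply, add_comm m l,
    legendreDeriv]

lemma derivative_legendreDeriv (l m : ℕ) :
    derivative (legendreDeriv l m) = legendreDeriv l (m + 1) := by
  rw [legendreDeriv, legendreDeriv, derivative_C_mul, ← add_assoc, Function.iterate_succ_apply']

lemma eval_neg_legendreDeriv (l m : ℕ) (x : ℝ) :
    (legendreDeriv l m).eval (-x) = (-1) ^ (l + m) * (legendreDeriv l m).eval x := by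
  have heven : ((X ^ 2 - 1 : ℝ[X]) ^ l).comp (-X) = (X ^ 2 - 1) ^ l := by simp
  have h := congrArg (eval (-x)) (iterate_derivative_comp_neg_X ((X ^ 2 - 1 : ℝ[X]) ^ l) (l + m))
  rw [heven] at h
  simp only [eval_mul, eval_pow, eval_neg, eval_one, eval_comp, eval_X, neg_neg] at h
  simp only [legendreDeriv, eval_mul, eval_C, h]
  ring

lemma natDegree_legendreDeriv_le (l m : ℕ) : (legendreDeriv l m).natDegree ≤ l - m := by
  refine (natDegree_C_mul_le _ _).trans ((natDegree_iterate_derivative _ _).trans ?_)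
  rw [natDegree_X_sq_sub_one_pow]
  omega

lemma coeff_legendreDeriv {l m : ℕ} (hm : m ≤ l) :
    (legendreDeriv l m).coeff (l - m) = legendreLead l m := by
  have htop : ((X ^ 2 - 1 : ℝ[X]) ^ l).coeff (2 * l) = 1 := by
    have h := (monic_X_sq_sub_one_pow l).coeff_natDegree
    rwa [natDegree_X_sq_sub_one_pow] at h
  rw [legendreDeriv, coeff_C_mul, coeff_iterate_derivative, show l - m + (l + m) = 2 * l by omega,
    htop, nsmul_eq_mul, mul_one, legendreLead]
  ring

lemma legendreLead_pos {l m : ℕ} (hm : m ≤ l) : 0 < legendreLead l m := by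
  have : 0 < (2 * l).descFactorial (l + m) := Nat.descFactorial_pos.mpr (by omega)
  unfold legendreLead
  positivity

lemma legendreLead_succ {l m : ℕ} (hm : m ≤ l) :
    legendreLead l (m + 1) = ((l : ℝ) - m) * legendreLead l m := by
  rw [legendreLead, legendreLead, ← add_assoc, Nat.descFactorial_succ,
    show 2 * l - (l + m) = l - m by omega, Nat.cast_mul, Nat.cast_sub hm]
  ring

noncomputable def jacobiIntegral (m : ℕ) : ℝ[X] →ₗ[ℝ] ℝ where
  toFun p := ∫ x in (-1 : ℝ)..1, (1 - x ^ 2) ^ m * p.eval x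
  map_add' p q := by
    simp only [eval_add, mul_add]
    exact intervalIntegral.integral_add (Continuous.intervalIntegrable (by fun_prop) _ _)
      (Continuous.intervalIntegrable (by fun_prop) _ _)
  map_smul' c p := by
    simp only [eval_smul, smul_eq_mul, RingHom.id_apply, ← intervalIntegral.integral_const_mul]
    congr 1
    ext x
    ring

lemma jacobiIntegral_apply (m : ℕ) (p : ℝ[X]) :
    jacobiIntegral m p = ∫ x in (-1 : ℝ)..1, (1 - x ^ 2) ^ m * p.eval x :=
  rfl

lemma jacobiIntegral_eq_jacobiIntegral_zero (m : ℕ) (p : ℝ[X]) :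
    jacobiIntegral m p = jacobiIntegral 0 ((1 - X ^ 2) ^ m * p) := by
  simp [jacobiIntegral_apply]

lemma jacobiIntegral_succ (m : ℕ) (p : ℝ[X]) :
    jacobiIntegral (m + 1) p = jacobiIntegral m ((1 - X ^ 2) * p) := by
  rw [jacobiIntegral_eq_jacobiIntegral_zero, jacobiIntegral_eq_jacobiIntegral_zero m, pow_succ,
    mul_assoc]

lemma jacobiIntegral_C_mul (m : ℕ) (a : ℝ) (p : ℝ[X]) :
    jacobiIntegral m (C a * p) = a * jacobiIntegral m p := by
  rw [C_mul', map_smul, smul_eq_mul]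

lemma jacobiIntegral_eq_zero_of_odd {m : ℕ} {p : ℝ[X]} (hp : ∀ x, p.eval (-x) = -p.eval x) :
    jacobiIntegral m p = 0 := by
  have h := intervalIntegral.integral_comp_neg (a := -1) (b := 1)
    fun x : ℝ => (1 - x ^ 2) ^ m * p.eval x
  simp only [neg_neg, neg_sq, hp, mul_neg, intervalIntegral.integral_neg] at h
  rw [jacobiIntegral_apply]
  linarith

open MeasureTheory in
lemma jacobiIntegral_mul_self_pos (m : ℕ) {U : ℝ[X]} (hU : U ≠ 0) :
    0 < jacobiIntegral m (U * U) := by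
  set f : ℝ → ℝ := fun x => (1 - x ^ 2) ^ m * (U * U).eval x
  have hnonneg : 0 ≤ᵐ[volume.restrict (Set.uIoc (-1) 1)] f := by
    refine ae_restrict_of_forall_mem measurableSet_uIoc fun x hx => ?_
    rw [Set.uIoc_of_le (by norm_num)] at hx
    have : 0 ≤ 1 - x ^ 2 := by nlinarith [hx.1, hx.2]
    exact mul_nonneg (pow_nonneg this m) (by rw [eval_mul]; exact mul_self_nonneg _)
  have hroots : volume {x : ℝ | U.IsRoot x} = 0 :=
    (finite_setOfPred_isRoot hU).measure_zero _
  rw [jacobiIntegral_apply, intervalIntegral.integral_pos_iff_support_of_nonneg_ae' hnonneg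
    (Continuous.intervalIntegrable (by fun_prop) _ _)]
  refine ⟨by norm_num, ?_⟩
  calc (0 : ENNReal) < volume (Set.Ioo (-1 : ℝ) 1 \ {x | U.IsRoot x}) := by
        rw [measure_sdiff_null hroots, Real.volume_Ioo]
        norm_num
    _ ≤ volume (Function.support f ∩ Set.Ioc (-1) 1) := by
        refine measure_mono fun x ⟨hx, hxU⟩ => ⟨?_, Set.Ioo_subset_Ioc_self hx⟩
        have : 0 < 1 - x ^ 2 := by nlinarith [hx.1, hx.2]
        exact mul_ne_zero (pow_ne_zero _ this.ne')
          (by rw [eval_mul]; exact mul_self_ne_zero.mpr hxU)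

lemma jacobiIntegral_one_succ (l : ℕ) :
    jacobiIntegral (l + 1) 1 = (2 * l + 2) / (2 * l + 3) * jacobiIntegral l 1 := by
  have hderiv : derivative (X * (1 - X ^ 2) ^ (l + 1)) =
      C (2 * l + 3 : ℝ) * (1 - X ^ 2) ^ (l + 1) - C (2 * l + 2 : ℝ) * (1 - X ^ 2) ^ l := by
    simp only [derivative_mul, derivative_X, derivative_pow, derivative_sub, derivative_one,
      map_add, map_mul, map_natCast, C_ofNat]
    push_cast
    ring
  have hzero : jacobiIntegral 0 (derivative (X * (1 - X ^ 2) ^ (l + 1))) = 0 := by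
    rw [jacobiIntegral_apply]
    simp only [pow_zero, one_mul, integral_derivative_eval]
    simp
  rw [hderiv, map_sub, jacobiIntegral_C_mul, jacobiIntegral_C_mul,
    ← mul_one ((1 - X ^ 2 : ℝ[X]) ^ (l + 1)), ← mul_one ((1 - X ^ 2 : ℝ[X]) ^ l),
    ← jacobiIntegral_eq_jacobiIntegral_zero, ← jacobiIntegral_eq_jacobiIntegral_zero] at hzero
  field_simp
  linarith

lemma jacobiIntegral_one (l : ℕ) :
    jacobiIntegral l 1 = 2 ^ (2 * l + 1) * (l ! : ℝ) ^ 2 / (2 * l + 1)! := by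
  induction l with
  | zero => norm_num [jacobiIntegral_apply]
  | succ l ih =>
    rw [jacobiIntegral_one_succ, ih, show 2 * (l + 1) + 1 = 2 * l + 1 + 1 + 1 by ring,
      Nat.factorial_succ (2 * l + 1 + 1), Nat.factorial_succ (2 * l + 1), Nat.factorial_succ l]
    push_cast
    field_simp
    ring

noncomputable def legendreMoment (l m : ℕ) : ℝ := 2 ^ (l + 1) * l ! * (l + m)! / (2 * l + 1)!

lemma integral_X_sq_sub_one_pow (l : ℕ) :
    ∫ x in (-1 : ℝ)..1, ((X ^ 2 - 1 : ℝ[X]) ^ l).eval x = (-1) ^ l * jacobiIntegral l 1 := by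
  rw [jacobiIntegral_apply, ← intervalIntegral.integral_const_mul]
  congr 1
  ext x
  simp only [eval_pow, eval_sub, eval_X, eval_one, mul_one, ← mul_pow]
  ring

/-- Rodrigues' formula and `l + m` integrations by parts. -/
lemma jacobiIntegral_legendreDeriv_mul_of_natDegree_le {l m : ℕ} {s : ℝ[X]}
    (hs : s.natDegree ≤ l - m) (hm : m ≤ l) :
    jacobiIntegral m (legendreDeriv l m * s) = legendreMoment l m * s.coeff (l - m) := by
  set v : ℝ[X] := (X ^ 2 - 1) ^ m * s
  have hv : v.natDegree ≤ l + m :=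
    natDegree_mul_le.trans (by rw [natDegree_X_sq_sub_one_pow]; omega)
  have hvtop : v.coeff (l + m) = s.coeff (l - m) := by
    have h := (monic_X_sq_sub_one_pow m).coeff_natDegree
    rw [natDegree_X_sq_sub_one_pow] at h
    rw [show l + m = 2 * m + (l - m) by omega,
      coeff_mul_add_eq_of_natDegree_le (natDegree_X_sq_sub_one_pow m).le hs, h, one_mul]
  have hibp := integral_iterate_derivative_mul (P := X ^ 2 - 1) (a := -1) (b := 1)
    (by simp) (by simp) dvd_rfl (l + m) (Dvd.intro s rfl : (X ^ 2 - 1) ^ m ∣ v) le_rfl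
  have hsign : (-1 : ℝ) ^ m * ((-1) ^ (l + m) * (-1) ^ l) = 1 := by
    rw [← pow_add, ← pow_add]
    exact Even.neg_one_pow ⟨l + m, by ring⟩
  calc jacobiIntegral m (legendreDeriv l m * s)
      = (-1) ^ m / (2 ^ l * l ! : ℝ) * ∫ x in (-1 : ℝ)..1,
          (derivative^[l + m] ((X ^ 2 - 1) ^ l)).eval x * v.eval x := by
        rw [jacobiIntegral_apply, ← intervalIntegral.integral_const_mul]
        congr 1
        ext x
        simp only [legendreDeriv, v, eval_mul, eval_C, eval_pow, eval_sub, eval_X, eval_one]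
        rw [show (1 - x ^ 2) = -1 * (x ^ 2 - 1) by ring, mul_pow]
        ring
    _ = (-1) ^ m * ((-1) ^ (l + m) * (-1) ^ l) *
          ((l + m)! * jacobiIntegral l 1 / (2 ^ l * l !) * v.coeff (l + m)) := by
        rw [hibp, iterate_derivative_eq_C_of_natDegree_le hv]
        simp only [eval_C]
        rw [intervalIntegral.integral_mul_const, integral_X_sq_sub_one_pow]
        ring
    _ = legendreMoment l m * s.coeff (l - m) := by
        rw [hsign, hvtop, jacobiIntegral_one, legendreMoment]
        field_simp
        ring

lemma jacobiIntegral_legendreDeriv_mul {l m : ℕ} {s : ℝ[X]} (hs : s.natDegree ≤ l - m + 1)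
    (hm : m ≤ l) :
    jacobiIntegral m (legendreDeriv l m * s) = legendreMoment l m * s.coeff (l - m) := by
  set t := s - C (s.coeff (l - m + 1)) * X ^ (l - m + 1)
  have ht : t.natDegree ≤ l - m := by
    refine natDegree_le_pred (n := l - m + 1) ((natDegree_sub_le _ _).trans ?_) (by simp [t])
    exact max_le hs ((natDegree_C_mul_le _ _).trans (natDegree_X_pow_le _))
  have hodd : jacobiIntegral m (legendreDeriv l m * X ^ (l - m + 1)) = 0 := by
    refine jacobiIntegral_eq_zero_of_odd fun x => ?_
    have h : (-1 : ℝ) ^ (l + m) * (-1) ^ (l - m + 1) = -1 := by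
      rw [← pow_add]
      exact Odd.neg_one_pow ⟨l, by omega⟩
    simp only [eval_mul, eval_neg_legendreDeriv, eval_pow, eval_X, neg_pow x]
    linear_combination ((legendreDeriv l m).eval x * x ^ (l - m + 1)) * h
  have hsplit : s = t + C (s.coeff (l - m + 1)) * X ^ (l - m + 1) := by ring
  rw [hsplit, mul_add, map_add, mul_left_comm, jacobiIntegral_C_mul, hodd,
    jacobiIntegral_legendreDeriv_mul_of_natDegree_le ht hm]
  simp [t]

lemma legendreMoment_succ_succ_add (l m : ℕ) :
    legendreMoment (l + 1) (m + 1) + ((l : ℝ) + 1 - m) * legendreMoment (l + 1) m =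
      ((l : ℝ) + 1 + m) * legendreMoment l m := by
  simp only [legendreMoment, show 2 * (l + 1) + 1 = 2 * l + 1 + 1 + 1 by ring,
    show l + 1 + (m + 1) = l + m + 1 + 1 by ring, show l + 1 + m = l + m + 1 by ring,
    Nat.factorial_succ]
  push_cast
  field_simp
  ring

lemma legendreMoment_mul_legendreLead {l m : ℕ} (hm : m ≤ l + 1) :
    legendreMoment l m * legendreLead (l + 1) m * (l + 1 + m) =
      2 * (l + 1 + m)! / (l + 1 - m)! := by
  have hdesc : ((2 * (l + 1)).descFactorial (l + 1 + m) : ℝ) =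
      (2 * l + 2) * (2 * l + 1)! / (l + 1 - m)! := by
    have h := Nat.factorial_mul_descFactorial (show l + 1 + m ≤ 2 * (l + 1) by omega)
    rw [show 2 * (l + 1) - (l + 1 + m) = l + 1 - m by omega,
      show 2 * (l + 1) = 2 * l + 1 + 1 by ring, Nat.factorial_succ] at h
    rw [show 2 * (l + 1) = 2 * l + 1 + 1 by ring, eq_div_iff (by positivity), mul_comm]
    exact_mod_cast h
  have h3 : ((l + 1 + m)! : ℝ) = (l + m + 1) * (l + m)! := by
    rw [Nat.add_right_comm, Nat.factorial_succ]
    push_cast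
    ring
  rw [legendreMoment, legendreLead, hdesc, h3, Nat.factorial_succ l]
  push_cast
  field_simp
  ring

noncomputable def legendreThreeTermDefect (l m : ℕ) : ℝ[X] :=
  (1 - X ^ 2) * legendreDeriv (l + 1) (m + 1) - C ((l : ℝ) + 1 + m) * legendreDeriv l m +
    C ((l : ℝ) + 1 - m) * (X * legendreDeriv (l + 1) m)

/-- The leading terms cancel by `legendreLead_succ`. -/
lemma natDegree_legendreThreeTermDefect_le {l m : ℕ} (hm : m ≤ l) :
    (legendreThreeTermDefect l m).natDegree ≤ l - m + 1 := by
  have hdeg1 := natDegree_legendreDeriv_le (l + 1) (m + 1)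
  have hdeg0 := natDegree_legendreDeriv_le l m
  have hdeg2 := natDegree_legendreDeriv_le (l + 1) m
  have hle : (legendreThreeTermDefect l m).natDegree ≤ l - m + 2 := by
    refine (natDegree_add_le _ _).trans (max_le ((natDegree_sub_le _ _).trans (max_le ?_ ?_)) ?_)
    · refine natDegree_mul_le.trans ?_
      have : (1 - X ^ 2 : ℝ[X]).natDegree ≤ 2 := (natDegree_sub_le _ _).trans (by simp)
      omega
    · exact (natDegree_C_mul_le _ _).trans (by omega)
    · refine (natDegree_C_mul_le _ _).trans (natDegree_mul_le.trans ?_)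
      have := natDegree_X_le (R := ℝ)
      omega
  refine natDegree_le_pred hle ?_
  have h1 := coeff_legendreDeriv (show m + 1 ≤ l + 1 by omega)
  have h2 := coeff_legendreDeriv (show m ≤ l + 1 by omega)
  rw [show l + 1 - (m + 1) = l - m by omega] at h1
  rw [show l + 1 - m = l - m + 1 by omega] at h2
  simp only [legendreThreeTermDefect, coeff_add, coeff_sub, coeff_C_mul, sub_mul, one_mul,
    coeff_X_pow_mul, coeff_X_mul, h1, h2]
  rw [coeff_eq_zero_of_natDegree_lt (by omega), coeff_eq_zero_of_natDegree_lt (by omega),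
    legendreLead_succ (by omega)]
  push_cast
  ring

lemma jacobiIntegral_legendreThreeTermDefect_mul {l m : ℕ} (hm : m ≤ l) {q : ℝ[X]}
    (hq : q.natDegree ≤ l - m + 1) : jacobiIntegral m (legendreThreeTermDefect l m * q) = 0 := by
  have hXq : (X * q).natDegree ≤ l + 1 - m + 1 :=
    natDegree_mul_le.trans (by have := natDegree_X_le (R := ℝ); omega)
  have hexpand : legendreThreeTermDefect l m * q =
      (1 - X ^ 2) * (legendreDeriv (l + 1) (m + 1) * q) -
        C ((l : ℝ) + 1 + m) * (legendreDeriv l m * q) +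
        C ((l : ℝ) + 1 - m) * (legendreDeriv (l + 1) m * (X * q)) := by
    rw [legendreThreeTermDefect]
    ring
  rw [hexpand, map_add, map_sub, ← jacobiIntegral_succ, jacobiIntegral_C_mul,
    jacobiIntegral_C_mul, jacobiIntegral_legendreDeriv_mul (by omega) (by omega),
    jacobiIntegral_legendreDeriv_mul hq hm, jacobiIntegral_legendreDeriv_mul hXq (by omega),
    show l + 1 - (m + 1) = l - m by omega, show l + 1 - m = l - m + 1 by omega, coeff_X_mul]
  linear_combination q.coeff (l - m) * legendreMoment_succ_succ_add l m

/-- The defect is orthogonal to itself. -/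
lemma one_sub_X_sq_mul_legendreDeriv {l m : ℕ} (hm : m ≤ l) :
    (1 - X ^ 2) * legendreDeriv (l + 1) (m + 1) =
      C ((l : ℝ) + 1 + m) * legendreDeriv l m -
        C ((l : ℝ) + 1 - m) * (X * legendreDeriv (l + 1) m) := by
  have h : legendreThreeTermDefect l m = 0 := by
    by_contra hne
    exact (jacobiIntegral_mul_self_pos m hne).ne'
      (jacobiIntegral_legendreThreeTermDefect_mul hm (natDegree_legendreThreeTermDefect_le hm))
  rw [legendreThreeTermDefect] at h
  linear_combination h

section GaussQuadrature

open Lagrange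

variable {F ι : Type*} [Field F] {s : Finset ι} {v : ι → F}

lemma eq_C_mul_nodal {p : F[X]} (hp : p.natDegree ≤ s.card) (hroot : ∀ i ∈ s, p.eval (v i) = 0)
    (hv : Set.InjOn v s) : p = C (p.coeff s.card) * nodal s v := by
  refine sub_eq_zero.mp (eq_zero_of_degree_lt_of_eval_index_eq_zero _ hv ?_ fun i hi => ?_)
  · refine degree_lt_iff_coeff_zero _ _ |>.mpr fun k hk => ?_
    have htop : (nodal s v).coeff s.card = 1 := by
      simpa using (nodal_monic (s := s) (v := v)).coeff_natDegree
    rw [coeff_sub, coeff_C_mul]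
    rcases hk.eq_or_lt with hk | hlt
    · rw [← hk, htop, mul_one, sub_self]
    · have hN : (nodal s v).natDegree < k := by rwa [natDegree_nodal]
      rw [coeff_eq_zero_of_natDegree_lt hN, coeff_eq_zero_of_natDegree_lt (hp.trans_lt hlt),
        mul_zero, sub_self]
  · rw [eval_sub, hroot i hi, eval_mul, eval_nodal_at_node hi, mul_zero, sub_self]

variable [DecidableEq ι] {I : F[X] →ₗ[F] F}

theorem gauss_quadrature (hv : Set.InjOn v s)
    (horth : ∀ q : F[X], q.natDegree < s.card → I (nodal s v * q) = 0) {p : F[X]}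
    (hp : p.natDegree < 2 * s.card) :
    I p = ∑ i ∈ s, p.eval (v i) * I (Lagrange.basis s v i) := by
  have hquot : (p /ₘ nodal s v).natDegree < s.card := by
    rw [natDegree_divByMonic _ nodal_monic, natDegree_nodal]
    omega
  have hrem : (p %ₘ nodal s v).degree < s.card := by
    simpa using degree_modByMonic_lt p (nodal_monic (s := s) (v := v))
  have hval : ∀ i ∈ s, (p %ₘ nodal s v).eval (v i) = p.eval (v i) := by
    intro i hi
    rw [modByMonic_eq_sub_mul_div, eval_sub, eval_mul, eval_nodal_at_node hi,
      zero_mul, sub_zero]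
  conv_lhs => rw [← modByMonic_add_div p (nodal s v), map_add, horth _ hquot, add_zero,
    eq_interpolate_of_eval_eq _ hv hrem hval, interpolate_apply, map_sum]
  simp_rw [C_mul', map_smul, smul_eq_mul]

lemma map_mul_nodal_erase (horth : ∀ q : F[X], q.natDegree < s.card → I (nodal s v * q) = 0)
    {i : ι} (hi : i ∈ s) {Q : F[X]} (hQ : Q.natDegree ≤ s.card) :
    I (Q * nodal (s.erase i) v) = Q.eval (v i) * I (nodal (s.erase i) v) := by
  set D := (Q - C (Q.eval (v i))) /ₘ (X - C (v i))
  have hD : (X - C (v i)) * D = Q - C (Q.eval (v i)) :=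
    mul_divByMonic_eq_iff_isRoot.mpr (by simp)
  have hDdeg : D.natDegree < s.card := by
    have := Finset.card_pos.mpr ⟨i, hi⟩
    rw [natDegree_divByMonic _ (monic_X_sub_C _), natDegree_X_sub_C]
    have := (natDegree_sub_le Q (C (Q.eval (v i)))).trans (by simpa using hQ)
    omega
  have hsplit :
      Q * nodal (s.erase i) v = nodal s v * D + C (Q.eval (v i)) * nodal (s.erase i) v := by
    rw [nodal_eq_mul_nodal_erase hi]
    linear_combination (nodal (s.erase i) v) * hD.symm
  rw [hsplit, map_add, horth D hDdeg, zero_add, C_mul', map_smul, smul_eq_mul]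

lemma eval_mul_eval_derivative_nodal_mul_map_basis (hv : Set.InjOn v s)
    (horth : ∀ q : F[X], q.natDegree < s.card → I (nodal s v * q) = 0) {i : ι} (hi : i ∈ s)
    {Q : F[X]} (hQ : Q.natDegree ≤ s.card) :
    Q.eval (v i) * (derivative (nodal s v)).eval (v i) * I (Lagrange.basis s v i) =
      I (Q * nodal (s.erase i) v) := by
  have hw : (derivative (nodal s v)).eval (v i) * nodalWeight s v i = 1 := by
    rw [nodalWeight_eq_eval_derivative_nodal hi]
    refine mul_inv_cancel₀ fun h => nodalWeight_ne_zero hv hi ?_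
    rw [nodalWeight_eq_eval_derivative_nodal hi, h, inv_zero]
  rw [map_mul_nodal_erase horth hi hQ, basis_eq_prod_sub_inv_mul_nodal_div hi,
    ← nodal_erase_eq_nodal_div hi, C_mul', map_smul, smul_eq_mul]
  linear_combination (Q.eval (v i) * I (nodal (s.erase i) v)) * hw

end GaussQuadrature

section RootsOfLegendreDeriv

variable {l m : ℕ} {ι : Type*} [Fintype ι] {ν : ι → ℝ}

lemma legendreDeriv_eq_C_mul_nodal (hm : m ≤ l) (hν : Function.Injective ν)
    (hcard : Fintype.card ι = l - m) (hroot : ∀ i, (legendreDeriv l m).eval (ν i) = 0) :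
    legendreDeriv l m = C (legendreLead l m) * Lagrange.nodal Finset.univ ν := by
  have h := eq_C_mul_nodal (p := legendreDeriv l m) (s := Finset.univ)
    (by rw [Finset.card_univ, hcard]; exact natDegree_legendreDeriv_le _ _)
    (fun i _ => hroot i) hν.injOn
  rwa [Finset.card_univ, hcard, coeff_legendreDeriv hm] at h

lemma jacobiIntegral_nodal_mul_eq_zero (hm : m ≤ l) (hν : Function.Injective ν)
    (hcard : Fintype.card ι = l - m) (hroot : ∀ i, (legendreDeriv l m).eval (ν i) = 0)
    {q : ℝ[X]} (hq : q.natDegree < (Finset.univ : Finset ι).card) :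
    jacobiIntegral m (Lagrange.nodal Finset.univ ν * q) = 0 := by
  rw [Finset.card_univ, hcard] at hq
  have h := jacobiIntegral_legendreDeriv_mul (s := q) (by omega) hm
  rw [legendreDeriv_eq_C_mul_nodal hm hν hcard hroot, mul_assoc, jacobiIntegral_C_mul,
    coeff_eq_zero_of_natDegree_lt hq, mul_zero] at h
  exact (mul_eq_zero.mp h).resolve_left (legendreLead_pos hm).ne'

/-- The Christoffel trick with `Q = P_l^{(m)}`, combined with the three-term relation at the
node `ν i`. -/
lemma jacobiIntegral_basis_of_roots_legendreDeriv [DecidableEq ι] (hm : m ≤ l)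
    (hν : Function.Injective ν) (hcard : Fintype.card ι = l + 1 - m)
    (hroot : ∀ i, (legendreDeriv (l + 1) m).eval (ν i) = 0) (i : ι) :
    jacobiIntegral m (Lagrange.basis Finset.univ ν i) = 2 * (l + 1 + m)! / (l + 1 - m)! /
      ((1 - ν i ^ 2) * (legendreDeriv (l + 1) (m + 1)).eval (ν i) ^ 2) := by
  set N := Lagrange.nodal Finset.univ ν
  have hchristoffel := eval_mul_eval_derivative_nodal_mul_map_basis hν.injOn
    (fun q => jacobiIntegral_nodal_mul_eq_zero (by omega) hν hcard hroot) (Finset.mem_univ i)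
    (Q := legendreDeriv l m)
    (by rw [Finset.card_univ, hcard]; have := natDegree_legendreDeriv_le l m; omega)
  have hNi : (Lagrange.nodal (Finset.univ.erase i) ν).natDegree = l - m := by
    rw [Lagrange.natDegree_nodal, Finset.card_erase_of_mem (Finset.mem_univ i), Finset.card_univ,
      hcard]
    omega
  rw [jacobiIntegral_legendreDeriv_mul (by omega) hm, ← hNi,
    Lagrange.nodal_monic.coeff_natDegree, mul_one] at hchristoffel
  have hT' : (legendreDeriv (l + 1) (m + 1)).eval (ν i) =
      legendreLead (l + 1) m * (derivative N).eval (ν i) := by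
    rw [← derivative_legendreDeriv, legendreDeriv_eq_C_mul_nodal (by omega) hν hcard hroot,
      derivative_C_mul, eval_C_mul]
  have hthreeTerm := congrArg (eval (ν i)) (one_sub_X_sq_mul_legendreDeriv hm)
  simp only [eval_mul, eval_sub, eval_C, eval_one, eval_pow, eval_X, hroot i, mul_zero,
    sub_zero, hT'] at hthreeTerm
  have hκ : (1 - ν i ^ 2) * (legendreDeriv (l + 1) (m + 1)).eval (ν i) ^ 2 *
      jacobiIntegral m (Lagrange.basis Finset.univ ν i) = 2 * (l + 1 + m)! / (l + 1 - m)! := by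
    rw [← legendreMoment_mul_legendreLead (by omega), ← hchristoffel, sq, hT']
    linear_combination (legendreLead (l + 1) m * (derivative N).eval (ν i) *
      jacobiIntegral m (Lagrange.basis Finset.univ ν i)) * hthreeTerm
  have hpos : (0 : ℝ) < 2 * (l + 1 + m)! / (l + 1 - m)! := by positivity
  exact eq_div_of_mul_eq (left_ne_zero_of_mul (hκ ▸ hpos.ne')) (by rw [mul_comm, hκ])

theorem jacobiIntegral_eq_sum_roots_legendreDeriv [DecidableEq ι] (hm : m ≤ l)
    (hν : Function.Injective ν) (hcard : Fintype.card ι = l + 1 - m)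
    (hroot : ∀ i, (legendreDeriv (l + 1) m).eval (ν i) = 0) {p : ℝ[X]}
    (hp : p.natDegree < 2 * (l + 1 - m)) :
    jacobiIntegral m p = ∑ i, p.eval (ν i) * (2 * (l + 1 + m)! / (l + 1 - m)! /
      ((1 - ν i ^ 2) * (legendreDeriv (l + 1) (m + 1)).eval (ν i) ^ 2)) := by
  rw [gauss_quadrature hν.injOn
    (fun q => jacobiIntegral_nodal_mul_eq_zero (by omega) hν hcard hroot)
    (by rwa [Finset.card_univ, hcard])]
  exact Finset.sum_congr rfl fun i _ => by
    rw [jacobiIntegral_basis_of_roots_legendreDeriv hm hν hcard hroot]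

end RootsOfLegendreDeriv

noncomputable def nalfConst (m l : ℕ) : ℝ :=
  Real.sqrt ((2 * l + 1) / 2 * ((l - m)! : ℝ) / ((l + m)! : ℝ))

lemma nalf_eq (m l : ℕ) :
    nalf m l =
      fun x => nalfConst m l * (1 - x ^ 2) ^ ((m : ℝ) / 2) * (legendreDeriv l m).eval x := by
  ext x
  rw [nalf, iteratedDeriv_legendreP, nalfConst]

lemma nalfConst_sq (m l : ℕ) :
    nalfConst m l ^ 2 = (2 * l + 1) / 2 * ((l - m)! : ℝ) / ((l + m)! : ℝ) :=
  Real.sq_sqrt (by positivity)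

lemma nalfConst_pos (m l : ℕ) : 0 < nalfConst m l :=
  Real.sqrt_pos.mpr (by positivity)

lemma eval_legendreDeriv_eq_zero_of_nalf_eq_zero {m l : ℕ} {x : ℝ} (hx : x ^ 2 < 1)
    (h : nalf m l x = 0) : (legendreDeriv l m).eval x = 0 := by
  rw [nalf_eq] at h
  exact (mul_eq_zero.mp h).resolve_left
    (mul_ne_zero (nalfConst_pos m l).ne' (Real.rpow_pos_of_pos (by linarith) _).ne')

lemma deriv_nalf_of_eval_legendreDeriv_eq_zero {m l : ℕ} {x : ℝ} (hx : x ^ 2 < 1)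
    (h : (legendreDeriv l m).eval x = 0) :
    deriv (nalf m l) x =
      nalfConst m l * (1 - x ^ 2) ^ ((m : ℝ) / 2) * (legendreDeriv l (m + 1)).eval x := by
  have hbase : HasDerivAt (fun t : ℝ => (1 - t ^ 2) ^ ((m : ℝ) / 2))
      (-(2 * x) * ((m : ℝ) / 2) * (1 - x ^ 2) ^ ((m : ℝ) / 2 - 1)) x := by
    have := ((hasDerivAt_pow 2 x).const_sub 1).rpow_const (p := (m : ℝ) / 2)
      (Or.inl (by linarith))
    simpa using this
  have hd := ((hbase.mul ((legendreDeriv l m).hasDerivAt x)).const_mul (nalfConst m l)).deriv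
  rw [nalf_eq]
  simp only [Pi.mul_apply, mul_assoc] at hd ⊢
  rw [hd, h, derivative_legendreDeriv]
  ring

lemma nalf_weight_eq {m l : ℕ} {x : ℝ} (hx : x ^ 2 < 1) (h : (legendreDeriv l m).eval x = 0) :
    (2 * l + 1) * (1 - x ^ 2) ^ m / ((1 - x ^ 2) * deriv (nalf m l) x ^ 2) =
      2 * (l + m)! / (l - m)! / ((1 - x ^ 2) * (legendreDeriv l (m + 1)).eval x ^ 2) := by
  have hr : ((1 - x ^ 2) ^ ((m : ℝ) / 2)) ^ 2 = (1 - x ^ 2) ^ m := by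
    rw [← Real.rpow_natCast, ← Real.rpow_mul (by linarith)]
    norm_num
  rw [deriv_nalf_of_eval_legendreDeriv_eq_zero hx h, mul_pow, mul_pow, hr, nalfConst_sq]
  generalize (legendreDeriv l (m + 1)).eval x = t
  have hu : (1 - x ^ 2) ^ m ≠ 0 := pow_ne_zero _ (by linarith)
  generalize 1 - x ^ 2 = u at hu ⊢
  field_simp

section SymmetricNodes

variable {n : ℕ}

def symmetricNodes (y : Fin n → ℝ) : Fin n ⊕ Fin n ⊕ Unit → ℝ :=
  Sum.elim y (Sum.elim (fun j => -y j) fun _ => 0)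

lemma symmetricNodes_injective {y : Fin n → ℝ} (hy : Function.Injective y) (hpos : ∀ j, 0 < y j) :
    Function.Injective (symmetricNodes y) := by
  refine hy.sumElim (Function.Injective.sumElim (fun a b h => hy (neg_inj.mp h))
    (fun _ _ _ => rfl) fun j _ => (neg_neg_of_pos (hpos j)).ne) fun a b => ?_
  rcases b with b | _
  · exact fun h => (hpos a).not_ge (h ▸ (neg_nonpos.mpr (hpos b).le))
  · exact (hpos a).ne'

lemma sum_symmetricNodes (y : Fin n → ℝ) {f : ℝ → ℝ} (hf : ∀ x, f (-x) = f x) :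
    ∑ i, f (symmetricNodes y i) = f 0 + 2 * ∑ j, f (y j) := by
  simp [symmetricNodes, Fintype.sum_sum_type, hf]
  ring

lemma eval_legendreDeriv_symmetricNodes {l m : ℕ} (hodd : Odd (l + m)) {y : Fin n → ℝ}
    (hy : ∀ j, (legendreDeriv l m).eval (y j) = 0) (i : Fin n ⊕ Fin n ⊕ Unit) :
    (legendreDeriv l m).eval (symmetricNodes y i) = 0 := by
  rcases i with j | j | _
  · exact hy j
  · simp [symmetricNodes, eval_neg_legendreDeriv, hy j]
  · have h := eval_neg_legendreDeriv l m 0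
    rw [neg_zero, hodd.neg_one_pow] at h
    simp only [symmetricNodes, Sum.elim_inr]
    linarith

end SymmetricNodes

theorem gauss_jacobi_odd_general (m n : ℕ) (y : Fin n → ℝ) (hmono : StrictMono y)
    (hzero : ∀ j, y j ∈ Set.Ioo (0 : ℝ) 1 ∧ nalf m (m + 2 * n + 1) (y j) = 0)
    (sigma : Fin n → ℝ)
    (hsigma : ∀ j, sigma j = 2 * (2 * m + 4 * n + 3) /
      ((1 - y j ^ 2) * (deriv (nalf m (m + 2 * n + 1)) (y j)) ^ 2))
    (sigman : ℝ)
    (hsigman : sigman = (2 * m + 4 * n + 3) / (deriv (nalf m (m + 2 * n + 1)) 0) ^ 2)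
    (p : Polynomial ℝ) (hdeg : p.natDegree ≤ 4 * n)
    (heven : ∀ t : ℝ, p.eval (-t) = p.eval t) :
    ∫ t in (-1 : ℝ)..1, (1 - t ^ 2) ^ m * p.eval t
      = sigman * p.eval 0 + ∑ j, sigma j * (1 - y j ^ 2) ^ m * p.eval (y j) := by
  set w : ℝ → ℝ := fun x => 2 * (m + 2 * n + 1 + m)! / (m + 2 * n + 1 - m)! /
    ((1 - x ^ 2) * (legendreDeriv (m + 2 * n + 1) (m + 1)).eval x ^ 2)
  have hy : ∀ j, y j ^ 2 < 1 := fun j => by nlinarith [(hzero j).1.1, (hzero j).1.2]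
  have hroot_y j := eval_legendreDeriv_eq_zero_of_nalf_eq_zero (hy j) (hzero j).2
  have hroot := eval_legendreDeriv_symmetricNodes ⟨m + n, by omega⟩ hroot_y
  have hquad := jacobiIntegral_eq_sum_roots_legendreDeriv (l := m + 2 * n) (by omega)
    (symmetricNodes_injective hmono.injective fun j => (hzero j).1.1) (by simp; omega) hroot
    (p := p) (by omega)
  have hw : ∀ x, p.eval (-x) * w (-x) = p.eval x * w x := fun x => by
    simp [w, heven, eval_neg_legendreDeriv, mul_pow, ← pow_mul]
  have hsigma' : ∀ j, sigma j * (1 - y j ^ 2) ^ m = 2 * w (y j) := fun j => by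
    simp only [w, hsigma, ← nalf_weight_eq (hy j) (hroot_y j)]
    push_cast
    ring
  have hsigman' : sigman = w 0 := by
    have h := nalf_weight_eq (m := m) (l := m + 2 * n + 1) (x := 0) (by norm_num)
      (hroot (Sum.inr (Sum.inr ())))
    simp only [w, hsigman, ← h]
    push_cast
    ring
  calc ∫ t in (-1 : ℝ)..1, (1 - t ^ 2) ^ m * p.eval t
      = ∑ i, p.eval (symmetricNodes y i) * w (symmetricNodes y i) := hquad
    _ = p.eval 0 * w 0 + 2 * ∑ j, p.eval (y j) * w (y j) :=
        sum_symmetricNodes y (f := fun x => p.eval x * w x) hw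
    _ = sigman * p.eval 0 + ∑ j, sigma j * (1 - y j ^ 2) ^ m * p.eval (y j) := by
        simp_rw [hsigma', hsigman', Finset.mul_sum]
        congr 1
        · ring
        · exact Finset.sum_congr rfl fun j _ => by ring

theorem gauss_jacobi_odd (m n : ℕ) (hn : 0 < n) (y : Fin n → ℝ) (hmono : StrictMono y)
    (hzero : ∀ j, y j ∈ Set.Ioo (0 : ℝ) 1 ∧ nalf m (m + 2 * n + 1) (y j) = 0)
    (hall : ∀ z ∈ Set.Ioo (0 : ℝ) 1, nalf m (m + 2 * n + 1) z = 0 → ∃ j, z = y j)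
    (sigma : Fin n → ℝ)
    (hsigma : ∀ j, sigma j = 2 * (2 * m + 4 * n + 3) /
      ((1 - y j ^ 2) * (deriv (nalf m (m + 2 * n + 1)) (y j)) ^ 2))
    (sigman : ℝ)
    (hsigman : sigman = (2 * m + 4 * n + 3) / (deriv (nalf m (m + 2 * n + 1)) 0) ^ 2)
    (p : Polynomial ℝ) (hdeg : p.natDegree ≤ 4 * n)
    (heven : ∀ t : ℝ, p.eval (-t) = p.eval t) :
    ∫ t in (-1 : ℝ)..1, (1 - t ^ 2) ^ m * p.eval t
      = sigman * p.eval 0 + ∑ j, sigma j * (1 - y j ^ 2) ^ m * p.eval (y j) :=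
  gauss_jacobi_odd_general m n y hmono hzero sigma hsigma sigman hsigman p hdeg heven
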